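/- arXiv:2304.10146 — 4 statements merged into one kernel-verified Lean document; each statement's English description precedes it below -/
import Mathlib

section
/- Let A, B, W be symmetric real n×n matrices with A < W < B (i.e., W−A and B−W are positive definite). Consider the Lagrangian subspaces of R^{2n} (with standard symplectic form ω((q,p),(q',p')) = ⟨p,q'⟩ − ⟨q,p'⟩) given by α = {p = Aq}, β = {p = Bq}, L = {p = Wq}. Then the quadratic form Q[α,β](u) = ω(u₁,u₂), where u = u₁ + u₂ with u₁ ∈ α and u₂ ∈ β, is negative definite when restricted to L. -/
open Matrix

/-- The index form `Q[α,β]` is negative definite on the Lagrangian graph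
`L = {p = Wq}` whenever `A < W < B`. -/
theorem stmt_0 (n : ℕ) (A B W : Matrix (Fin n) (Fin n) ℝ)
    (hA : A.IsSymm) (hB : B.IsSymm) (hW : W.IsSymm)
    (hAW : (W - A).PosDef) (hWB : (B - W).PosDef) :
    ∀ q : Fin n → ℝ, q ≠ 0 →
      ∀ q₁ q₂ : Fin n → ℝ, q₁ + q₂ = q →
        A.mulVec q₁ + B.mulVec q₂ = W.mulVec q →
        (A.mulVec q₁) ⬝ᵥ q₂ - q₁ ⬝ᵥ (B.mulVec q₂) < 0 := by
  intro q hq q₁ q₂ hsum heq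
  -- key: (W - A) *ᵥ q₁ = (B - W) *ᵥ q₂
  have hkey : (W - A).mulVec q₁ = (B - W).mulVec q₂ := by
    have : W.mulVec q = W.mulVec q₁ + W.mulVec q₂ := by
      rw [← hsum, mulVec_add]
    rw [this] at heq
    simp only [sub_mulVec]
    linear_combination -heq
  -- symmetry of W - A and B - W
  have hP : (W - A).IsSymm := hA ▸ hW ▸ (by
    simp [Matrix.IsSymm, transpose_sub, hA.eq, hW.eq])
  have hR : (B - W).IsSymm := by
    simp [Matrix.IsSymm, transpose_sub, hB.eq, hW.eq]
  -- rewrite the target quantity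
  have e1 : q₁ ⬝ᵥ (B - W).mulVec q₂ = q₁ ⬝ᵥ (W - A).mulVec q₁ := by
    rw [← hkey]
  have swap : ∀ (M : Matrix (Fin n) (Fin n) ℝ), M.IsSymm → ∀ x y : Fin n → ℝ,
      x ⬝ᵥ M.mulVec y = (M.mulVec x) ⬝ᵥ y := by
    intro M hM x y
    rw [dotProduct_mulVec, ← mulVec_transpose, hM.eq]
  have e2 : q₁ ⬝ᵥ (W - A).mulVec q₂ = q₂ ⬝ᵥ (B - W).mulVec q₂ := by
    rw [swap _ hP, hkey, dotProduct_comm]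
  have expand : (A.mulVec q₁) ⬝ᵥ q₂ - q₁ ⬝ᵥ (B.mulVec q₂)
      = -(q₁ ⬝ᵥ (W - A).mulVec q₁ + q₂ ⬝ᵥ (B - W).mulVec q₂) := by
    have hAq : (A.mulVec q₁) ⬝ᵥ q₂ = q₁ ⬝ᵥ A.mulVec q₂ := (swap _ hA q₁ q₂).symm
    rw [hAq, ← e1, ← e2]
    simp only [sub_mulVec, dotProduct_sub]
    ring
  rw [expand, neg_lt, neg_zero]
  -- positivity
  have h1 : ∀ x : Fin n → ℝ, 0 ≤ x ⬝ᵥ (W - A).mulVec x := fun x => by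
    simpa using hAW.posSemidef.dotProduct_mulVec_nonneg x
  have h2 : ∀ x : Fin n → ℝ, 0 ≤ x ⬝ᵥ (B - W).mulVec x := fun x => by
    simpa using hWB.posSemidef.dotProduct_mulVec_nonneg x
  rcases eq_or_ne q₁ 0 with h | h
  · have hq₂ : q₂ ≠ 0 := by
      intro h2'; apply hq; rw [← hsum, h, h2']; simp
    have := hWB.dotProduct_mulVec_pos hq₂
    simp only [star_trivial] at this
    have := h1 q₁
    linarith
  · have := hAW.dotProduct_mulVec_pos h
    simp only [star_trivial] at this
    have := h2 q₂
    linarith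
end

section
/- Let B be a symmetric positive definite n×n matrix and W a symmetric invertible n×n matrix. Then the quadratic form z ↦ ⟨B⁻¹z, z⟩ − ⟨W⁻¹z, z⟩ on R^n is negative definite if and only if 0 < W < B (i.e., W is positive definite and B − W is positive definite). -/
/-!
For `P > 0` we have `⟪P⁻¹ z, z⟫ = max_y (2 ⟪y, z⟫ - ⟪P y, y⟫)`, attained at `y = P⁻¹ z`.
Testing this bound at `z = W y` shows that for `B, W > 0`, `B⁻¹ < W⁻¹` implies `W < B`;
applied to `W⁻¹, B⁻¹` it gives the converse. Negative definiteness of the form is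
`B⁻¹ < W⁻¹`, and `W⁻¹ > B⁻¹ > 0` forces `W > 0`.
-/

open Matrix

namespace Matrix

variable {n : Type*} [Fintype n]

lemma IsSymm.mulVec_dotProduct {M : Matrix n n ℝ} (hM : M.IsSymm) (x y : n → ℝ) :
    (M *ᵥ x) ⬝ᵥ y = x ⬝ᵥ (M *ᵥ y) := by
  rw [dotProduct_mulVec, ← mulVec_transpose, hM.eq]

variable [DecidableEq n]

lemma PosDef.two_mul_dotProduct_sub_le_inv {P : Matrix n n ℝ} (hP : P.PosDef) (y z : n → ℝ) :
    2 * (y ⬝ᵥ z) - y ⬝ᵥ (P *ᵥ y) ≤ (P⁻¹ *ᵥ z) ⬝ᵥ z := by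
  have hPsymm : P.IsSymm := isHermitian_iff_isSymm.mp hP.isHermitian
  have hPinv : P *ᵥ (P⁻¹ *ᵥ z) = z := by
    rw [mulVec_mulVec, mul_nonsing_inv _ (isUnit_iff_isUnit_det P |>.mp hP.isUnit), one_mulVec]
  have hgap := hP.posSemidef.dotProduct_mulVec_nonneg (y - P⁻¹ *ᵥ z)
  rw [star_trivial, mulVec_sub, hPinv, dotProduct_sub, sub_dotProduct, sub_dotProduct,
    ← hPsymm.mulVec_dotProduct (P⁻¹ *ᵥ z), hPinv] at hgap
  linarith [dotProduct_comm y z, hPsymm.mulVec_dotProduct y y]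

lemma posDef_sub_of_posDef_inv_sub_inv {B W : Matrix n n ℝ} (hB : B.PosDef) (hW : W.PosDef)
    (h : (W⁻¹ - B⁻¹).PosDef) : (B - W).PosDef := by
  refine PosDef.of_dotProduct_mulVec_pos (hB.isHermitian.sub hW.isHermitian) fun y hy => ?_
  have hWy : W⁻¹ *ᵥ (W *ᵥ y) = y := by
    rw [mulVec_mulVec, nonsing_inv_mul _ (isUnit_iff_isUnit_det W |>.mp hW.isUnit), one_mulVec]
  have hWy_ne : W *ᵥ y ≠ 0 := fun h0 => hy (by rw [← hWy, h0, mulVec_zero])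
  have hgap := h.dotProduct_mulVec_pos hWy_ne
  rw [star_trivial, sub_mulVec, dotProduct_sub, hWy] at hgap
  have hvar := hB.two_mul_dotProduct_sub_le_inv y (W *ᵥ y)
  rw [star_trivial, sub_mulVec, dotProduct_sub]
  linarith [dotProduct_comm y (W *ᵥ y), dotProduct_comm (B⁻¹ *ᵥ (W *ᵥ y)) (W *ᵥ y)]

lemma posDef_inv_sub_inv_iff {B W : Matrix n n ℝ} (hB : B.PosDef) (hW : W.PosDef) :
    (W⁻¹ - B⁻¹).PosDef ↔ (B - W).PosDef := by
  refine ⟨posDef_sub_of_posDef_inv_sub_inv hB hW, fun h => ?_⟩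
  refine posDef_sub_of_posDef_inv_sub_inv hW.inv hB.inv ?_
  rwa [nonsing_inv_nonsing_inv _ (isUnit_iff_isUnit_det W |>.mp hW.isUnit),
    nonsing_inv_nonsing_inv _ (isUnit_iff_isUnit_det B |>.mp hB.isUnit)]

end Matrix

theorem stmt_2_general (n : ℕ) (B W : Matrix (Fin n) (Fin n) ℝ)
    (hB : B.PosDef) (hW : W.IsSymm) :
    (∀ z : Fin n → ℝ, z ≠ 0 →
        (B⁻¹.mulVec z) ⬝ᵥ z - (W⁻¹.mulVec z) ⬝ᵥ z < 0) ↔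
      (W.PosDef ∧ (B - W).PosDef) := by
  have hherm : (W⁻¹ - B⁻¹).IsHermitian :=
    (isHermitian_iff_isSymm.mpr hW).inv.sub hB.isHermitian.inv
  have hform (z : Fin n → ℝ) :
      star z ⬝ᵥ ((W⁻¹ - B⁻¹) *ᵥ z) = -((B⁻¹ *ᵥ z) ⬝ᵥ z - (W⁻¹ *ᵥ z) ⬝ᵥ z) := by
    rw [star_trivial, sub_mulVec, dotProduct_sub, dotProduct_comm z, dotProduct_comm z]
    ring
  calc _ ↔ (W⁻¹ - B⁻¹).PosDef := by
        simp only [posDef_iff_dotProduct_mulVec, hherm, hform, neg_pos, true_and]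
    _ ↔ W.PosDef ∧ (B - W).PosDef := by
        refine ⟨fun h => ?_, fun ⟨hW', h⟩ => (posDef_inv_sub_inv_iff hB hW').mpr h⟩
        have hW' : W.PosDef := posDef_inv_iff.mp (by simpa only [sub_add_cancel] using h.add hB.inv)
        exact ⟨hW', (posDef_inv_sub_inv_iff hB hW').mp h⟩

/-- For `B` symmetric positive definite and `W` symmetric invertible, the form
`z ↦ ⟨B⁻¹z,z⟩ − ⟨W⁻¹z,z⟩` is negative definite iff `0 < W < B`. -/
theorem stmt_2 (n : ℕ) (B W : Matrix (Fin n) (Fin n) ℝ)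
    (hB : B.PosDef) (hW : W.IsSymm) (hWinv : IsUnit W.det) :
    (∀ z : Fin n → ℝ, z ≠ 0 →
        (B⁻¹.mulVec z) ⬝ᵥ z - (W⁻¹.mulVec z) ⬝ᵥ z < 0) ↔
      (W.PosDef ∧ (B - W).PosDef) :=
  stmt_2_general n B W hB hW
end

section
/- Let H₁₁, H₂₂' be symmetric d×d matrices and b = H₁₂ an invertible d×d matrix with bᵀ = H₂₁, and let dT be the block matrix [[−b⁻¹H₁₁, −b⁻¹],[H₂₁ − H₂₂'b⁻¹H₁₁, −H₂₂'b⁻¹]]. Let X be an invertible symmetric d×d matrix and let L = {(v, (−H₁₁+X)v) : v ∈ R^d} be the graph of W = −H₁₁ + X. Then dT(L) is the graph of the matrix W' = H₂₂' − bᵀ X⁻¹ b; equivalently, dT(L) = {(u, W'u)} where W' satisfies W' = H₂₂' − H₂₁ X⁻¹ H₁₂. -/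
open Matrix

private lemma key (d : ℕ) (H11 H22' X b : Matrix (Fin d) (Fin d) ℝ)
    (hXinv : IsUnit X.det) (hb : IsUnit b.det) :
    (H22' - bᵀ * X⁻¹ * b) * (-(b⁻¹ * X)) = bᵀ - H22' * (b⁻¹ * X) := by
  have hbb : b * b⁻¹ = 1 := mul_nonsing_inv b hb
  have hXX : X⁻¹ * X = 1 := nonsing_inv_mul X hXinv
  have : bᵀ * X⁻¹ * b * (b⁻¹ * X) = bᵀ := by
    calc bᵀ * X⁻¹ * b * (b⁻¹ * X) = bᵀ * X⁻¹ * (b * b⁻¹) * X := by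
          noncomm_ring
      _ = bᵀ * (X⁻¹ * X) := by rw [hbb]; noncomm_ring
      _ = bᵀ := by rw [hXX, mul_one]
  calc (H22' - bᵀ * X⁻¹ * b) * (-(b⁻¹ * X))
      = bᵀ * X⁻¹ * b * (b⁻¹ * X) - H22' * (b⁻¹ * X) := by noncomm_ring
    _ = bᵀ - H22' * (b⁻¹ * X) := by rw [this]

/-- The image under `dT` of the Lagrangian graph of `W = −H₁₁ + X` is the
graph of `W' = H₂₂' − bᵀ X⁻¹ b`. -/
theorem stmt_9 (d : ℕ) (H11 H22' X b : Matrix (Fin d) (Fin d) ℝ)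
    (h11 : H11.IsSymm) (h22 : H22'.IsSymm) (hX : X.IsSymm)
    (hXinv : IsUnit X.det) (hb : IsUnit b.det) :
    {p : (Fin d → ℝ) × (Fin d → ℝ) | ∃ v : Fin d → ℝ,
        p = ((-(b⁻¹ * H11)).mulVec v + (-(b⁻¹)).mulVec ((-H11 + X).mulVec v),
             (bᵀ - H22' * b⁻¹ * H11).mulVec v +
               (-(H22' * b⁻¹)).mulVec ((-H11 + X).mulVec v))} =
      {p : (Fin d → ℝ) × (Fin d → ℝ) | ∃ u : Fin d → ℝ,
        p = (u, (H22' - bᵀ * X⁻¹ * b).mulVec u)} := by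
  have hA : ∀ v : Fin d → ℝ,
      (-(b⁻¹ * H11)).mulVec v + (-(b⁻¹)).mulVec ((-H11 + X).mulVec v)
        = (-(b⁻¹ * X)).mulVec v := by
    intro v
    rw [mulVec_mulVec, ← add_mulVec]
    congr 1
    noncomm_ring
  have hB : ∀ v : Fin d → ℝ,
      (bᵀ - H22' * b⁻¹ * H11).mulVec v + (-(H22' * b⁻¹)).mulVec ((-H11 + X).mulVec v)
        = ((H22' - bᵀ * X⁻¹ * b) * (-(b⁻¹ * X))).mulVec v := by
    intro v
    rw [mulVec_mulVec, ← add_mulVec, key d H11 H22' X b hXinv hb]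
    congr 1
    noncomm_ring
  ext p
  simp only [Set.mem_setOf_eq]
  constructor
  · rintro ⟨v, rfl⟩
    refine ⟨(-(b⁻¹ * X)).mulVec v, ?_⟩
    rw [hA, hB, ← mulVec_mulVec]
  · rintro ⟨u, rfl⟩
    refine ⟨(-(X⁻¹ * b)).mulVec u, ?_⟩
    have hid : (-(b⁻¹ * X)) * (-(X⁻¹ * b)) = 1 := by
      have hXX : X * X⁻¹ = 1 := mul_nonsing_inv X hXinv
      have hbb : b⁻¹ * b = 1 := nonsing_inv_mul b hb
      calc (-(b⁻¹ * X)) * (-(X⁻¹ * b)) = b⁻¹ * (X * X⁻¹) * b := by noncomm_ring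
        _ = b⁻¹ * b := by rw [hXX, mul_one]
        _ = 1 := hbb
    have h1 : (-(b⁻¹ * X)).mulVec ((-(X⁻¹ * b)).mulVec u) = u := by
      rw [mulVec_mulVec, hid, one_mulVec]
    rw [hA, hB, ← mulVec_mulVec, h1]
end

section
/- Let n, u₁ ∈ R^d be unit vectors with ⟨u₁,n⟩ ≠ 0, let u₂ = u₁ − 2⟨u₁,n⟩n be the reflection of u₁ through the hyperplane {n}^⊥, and let R : {u₂}^⊥ → {u₁}^⊥ be the restriction to {u₂}^⊥ of the orthogonal reflection v ↦ v − 2⟨v,n⟩n. Then R is a well-defined linear isometry, and R ∘ p_{n,u₂} = p_{n,u₁}, where p_{n,u} : {n}^⊥ → {u}^⊥ denotes the restriction to {n}^⊥ of the orthogonal projection onto {u}^⊥. -/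
open Submodule RealInnerProductSpace

/-
The map `R v = v - 2⟪v, n⟫ n` is Mathlib's reflection in the hyperplane `{n}ᗮ`, a linear isometric
involution. It sends `u₁` to `u₂`, hence `u₂` back to `u₁`, and it fixes `{n}ᗮ` pointwise. So
`⟪R v, u₁⟫ = ⟪R v, R u₂⟫ = ⟪v, u₂⟫`, and for `v ⊥ n` also `⟪v, u₂⟫ = ⟪R v, R u₁⟫ = ⟪v, u₁⟫` and
`R (v - ⟪v, u₂⟫ u₂) = v - ⟪v, u₁⟫ u₁` by linearity.
-/

theorem reflection_orthogonal_singleton_apply {E : Type*} [NormedAddCommGroup E]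
    [InnerProductSpace ℝ E] {n : E} (hn : ‖n‖ = 1) (v : E) :
    (ℝ ∙ n)ᗮ.reflection v = v - (2 * ⟪v, n⟫) • n := by
  rw [reflection_orthogonal_apply, reflection_singleton_apply, hn, real_inner_comm]
  module

theorem stmt_18_general (d : ℕ) (n u₁ : EuclideanSpace ℝ (Fin d))
    (hn : ‖n‖ = 1) :
    let u₂ := u₁ - (2 * (inner ℝ u₁ n : ℝ)) • n
    let R := fun v : EuclideanSpace ℝ (Fin d) => v - (2 * (inner ℝ v n : ℝ)) • n
    (∀ v : EuclideanSpace ℝ (Fin d), (inner ℝ v u₂ : ℝ) = 0 →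
        (inner ℝ (R v) u₁ : ℝ) = 0 ∧ ‖R v‖ = ‖v‖) ∧
      (∀ v : EuclideanSpace ℝ (Fin d), (inner ℝ v n : ℝ) = 0 →
        R (v - (inner ℝ v u₂ : ℝ) • u₂) = v - (inner ℝ v u₁ : ℝ) • u₁) := by
  intro u₂ R
  set ρ := (ℝ ∙ n)ᗮ.reflection
  have hR (v) : R v = ρ v := (reflection_orthogonal_singleton_apply hn v).symm
  have hρu₁ : ρ u₁ = u₂ := (hR u₁).symm
  have hρu₂ : ρ u₂ = u₁ := by rw [← hρu₁, reflection_reflection]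
  have hfix (v) (hv : ⟪v, n⟫ = 0) : ρ v = v :=
    reflection_mem_subspace_eq_self (mem_orthogonal_singleton_iff_inner_left.mpr hv)
  refine ⟨fun v hv => ⟨?_, ?_⟩, fun v hv => ?_⟩
  · rw [hR, ← hρu₂, LinearIsometryEquiv.inner_map_map, hv]
  · rw [hR, LinearIsometryEquiv.norm_map]
  · have hvu : ⟪v, u₂⟫ = ⟪v, u₁⟫ := by
      conv_lhs => rw [← hfix v hv, ← hρu₁, LinearIsometryEquiv.inner_map_map]
    rw [hR, map_sub, map_smul, hfix v hv, hρu₂, hvu]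

/-- The reflection `R v = v − 2⟨v,n⟩n` maps `{u₂}^⊥` into `{u₁}^⊥`
isometrically (where `u₂ = u₁ − 2⟨u₁,n⟩n`), and `R ∘ p_{n,u₂} = p_{n,u₁}`, i.e. for
`v ⊥ n`, reflecting the projection of `v` onto `{u₂}^⊥` gives the projection onto
`{u₁}^⊥`. -/
theorem stmt_18 (d : ℕ) (n u₁ : EuclideanSpace ℝ (Fin d))
    (hn : ‖n‖ = 1) (hu₁ : ‖u₁‖ = 1) (hun : (inner ℝ u₁ n : ℝ) ≠ 0) :
    let u₂ := u₁ - (2 * (inner ℝ u₁ n : ℝ)) • n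
    let R := fun v : EuclideanSpace ℝ (Fin d) => v - (2 * (inner ℝ v n : ℝ)) • n
    (∀ v : EuclideanSpace ℝ (Fin d), (inner ℝ v u₂ : ℝ) = 0 →
        (inner ℝ (R v) u₁ : ℝ) = 0 ∧ ‖R v‖ = ‖v‖) ∧
      (∀ v : EuclideanSpace ℝ (Fin d), (inner ℝ v n : ℝ) = 0 →
        R (v - (inner ℝ v u₂ : ℝ) • u₂) = v - (inner ℝ v u₁ : ℝ) • u₁) :=
  stmt_18_general d n u₁ hn
end
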